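/- arXiv:2307.14684 — 3 statements merged into one kernel-verified Lean document; each statement's English description precedes it below -/
import Mathlib

section
/- Let m be a positive integer of the form m = 4s−2 for some s ∈ ℕ*. Then there exists an integer p with 0 ≤ p ≤ m−2 such that −cos(pmπ/(m−1)) = −sin(π/(2(m−1))). -/
open Real

theorem stmt_2 (s : ℕ) (hs : 1 ≤ s) (m : ℕ) (hm : m = 4 * s - 2) :
    ∃ p : ℤ, 0 ≤ p ∧ p ≤ (m : ℤ) - 2 ∧
      -Real.cos ((p : ℝ) * (m : ℝ) * π / ((m : ℝ) - 1)) =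
        -Real.sin (π / (2 * ((m : ℝ) - 1))) := by
  subst hm
  have h2 : 2 ≤ 4 * s := by omega
  refine ⟨2*(s:ℤ)-2, by omega, ?_, ?_⟩
  · have : ((4*s-2 : ℕ) : ℤ) = 4*(s:ℤ)-2 := by push_cast [h2]; ring
    rw [this]; omega
  · have hmr : ((4*s-2 : ℕ):ℝ) = 4*(s:ℝ)-2 := by push_cast [h2]; ring
    rw [hmr]
    have hs' : (1:ℝ) ≤ (s:ℝ) := by exact_mod_cast hs
    have hne : 4*(s:ℝ)-2-1 ≠ 0 := by nlinarith
    have key : ((2*(s:ℤ)-2 : ℤ):ℝ) * (4*(s:ℝ)-2) * π / (4*(s:ℝ)-2-1)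
        = π/2 - π/(2*(4*(s:ℝ)-2-1)) + (((s:ℤ)-1 : ℤ):ℝ) * (2*π) := by
      field_simp
      push_cast; ring
    rw [key, Real.cos_add_int_mul_two_pi, Real.cos_pi_div_two_sub]
end

section
/- Let m ≥ 2 be an integer and let c* be any element of the set { (−1)^l · (−cos(lmπ/(m−1))) : l = 0,...,2(m−1)−1 } with c* ≠ 0 (equivalently, any nonzero real of the form ±cos(kmπ/(m−1))). Then |c*| ≥ sin(π/(2(m−1))). -/
/-!
Since `cos x = sin (x + π/2)`, the value `±cos (k m π / (m-1))` is `±sin (j π / N)` with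
`N = 2(m-1)` and `j = 2km + m - 1`. As `|sin|` has period `π`, we may replace `j` by its
residue `r` mod `N`; if the sine does not vanish then `1 ≤ r ≤ N - 1`, so `r π / N` lies in
`[π/N, π - π/N]`, where the concavity of `sin` on `[0, π]` bounds it below by `sin (π/N)`.
-/

open Real Set

lemma Real.sin_le_sin_of_mem_Icc_pi_sub {a x : ℝ} (ha : 0 ≤ a) (hx : x ∈ Icc a (π - a)) :
    sin a ≤ sin x := by
  have haπ : a ≤ π := by linarith [hx.1.trans hx.2]
  have hmin := strictConcaveOn_sin_Icc.concaveOn.min_le_of_mem_Icc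
    (⟨ha, haπ⟩ : a ∈ Icc 0 π) (⟨by linarith, by linarith⟩ : π - a ∈ Icc 0 π) hx
  rwa [sin_pi_sub, min_self] at hmin

lemma Real.abs_sin_int_mul_pi_div_emod (j N : ℤ) (hN : 0 < N) :
    |sin (j * π / N)| = |sin ((j % N : ℤ) * π / N)| := by
  have hsplit : (j : ℝ) * π / N = (j % N : ℤ) * π / N + (j / N : ℤ) * π := by
    have hdiv : (j : ℝ) = (j % N : ℤ) + N * (j / N : ℤ) := by
      exact_mod_cast (Int.emod_add_mul_ediv j N).symm
    have hN' : (N : ℝ) ≠ 0 := by exact_mod_cast hN.ne'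
    rw [hdiv]
    field_simp
  rw [hsplit, sin_add_int_mul_pi, abs_mul, abs_neg_one_zpow, one_mul]

theorem Real.sin_pi_div_le_abs_sin_int_mul_pi_div (j N : ℤ) (hN : 0 < N)
    (hj : sin (j * π / N) ≠ 0) : sin (π / N) ≤ |sin (j * π / N)| := by
  replace hj := abs_ne_zero.mpr hj
  rw [abs_sin_int_mul_pi_div_emod j N hN] at hj ⊢
  have hr_pos : 0 < j % N := by
    refine (Int.emod_nonneg j hN.ne').lt_of_ne fun hr => hj ?_
    simp [← hr]
  set r := j % N
  have hr_lt : r < N := Int.emod_lt_of_pos j hN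
  have hNℝ : (0 : ℝ) < N := by exact_mod_cast hN
  have hr_mem : (r : ℝ) * π / N ∈ Icc (π / N) (π - π / N) := by
    have h1 : (1 : ℝ) ≤ r := by exact_mod_cast hr_pos
    have h2 : (r : ℝ) ≤ N - 1 := by exact_mod_cast Int.le_sub_one_of_lt hr_lt
    constructor
    · rw [div_le_div_iff_of_pos_right hNℝ]
      nlinarith [pi_pos]
    · rw [show π - π / N = (N - 1) * π / N by field_simp, div_le_div_iff_of_pos_right hNℝ]
      nlinarith [pi_pos]
  exact (sin_le_sin_of_mem_Icc_pi_sub (by positivity) hr_mem).trans (le_abs_self _)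

theorem stmt_4 (m : ℤ) (hm : 2 ≤ m) (c : ℝ)
    (hc : ∃ k : ℤ, c = Real.cos ((k : ℝ) * m * π / ((m : ℝ) - 1)) ∨
        c = -Real.cos ((k : ℝ) * m * π / ((m : ℝ) - 1)))
    (hne : c ≠ 0) :
    Real.sin (π / (2 * ((m : ℝ) - 1))) ≤ |c| := by
  obtain ⟨k, hk⟩ := hc
  have hm1 : (m : ℝ) - 1 ≠ 0 := by
    have : (2 : ℝ) ≤ m := by exact_mod_cast hm
    linarith
  set j : ℤ := 2 * k * m + (m - 1) with hj
  set N : ℤ := 2 * (m - 1) with hN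
  have hN_cast : (N : ℝ) = 2 * ((m : ℝ) - 1) := by push_cast [hN]; ring
  have hcos : cos ((k : ℝ) * m * π / ((m : ℝ) - 1)) = sin (j * π / N) := by
    rw [← cos_sub_pi_div_two, hN_cast]
    congr 1
    push_cast [hj]
    field_simp
    ring
  have habs : |c| = |sin (j * π / N)| := by
    rcases hk with rfl | rfl <;> simp only [abs_neg, hcos]
  rw [habs, ← hN_cast]
  exact sin_pi_div_le_abs_sin_int_mul_pi_div j N (by omega)
    (by rwa [← abs_ne_zero, ← habs, abs_ne_zero])
end

section
/- Let τ > 0, ε > 0, c > 0 be real numbers. If λ = p + iq is a complex number with p ≥ 0 and |q| < π/(2ε) satisfying e^{2λ}(1 + 2c e^{−ελ}) = −1, then a contradiction follows; i.e., the equation e^{2λ} + 2c e^{(2−ε)λ} + 1 = 0 has no root λ with Re λ ≥ 0 and |Im λ| < π/(2ε). -/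
/-!
Taking norms, `‖e^{2λ}‖ = e^{2p} ≥ 1`, while `w = 2c e^{-ελ}` has argument `-εq ∈ (-π/2, π/2)`,
so `Re w > 0` and `‖1 + w‖ > 1`. Hence the left-hand side has norm `> 1 = ‖-1‖`.
-/

open Complex Real

theorem Complex.one_lt_norm_one_add_of_re_pos {w : ℂ} (hw : 0 < w.re) : 1 < ‖1 + w‖ := by
  have : 1 < (1 + w).re := by simpa using hw
  exact this.trans_le (re_le_norm _)

theorem Complex.one_le_norm_exp_of_re_nonneg {z : ℂ} (hz : 0 ≤ z.re) : 1 ≤ ‖exp z‖ := by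
  rw [norm_exp]
  exact Real.one_le_exp hz

theorem Complex.exp_re_pos_of_abs_im_lt {z : ℂ} (hz : |z.im| < π / 2) : 0 < (exp z).re := by
  rw [exp_re]
  exact mul_pos (Real.exp_pos _) (Real.cos_pos_of_mem_Ioo (abs_lt.mp hz))

theorem Complex.exp_mul_one_add_ne_neg_one {z w : ℂ} (hz : 0 ≤ z.re) (hw : 0 < w.re) :
    exp z * (1 + w) ≠ -1 := by
  intro h
  have hnorm : 1 < ‖exp z * (1 + w)‖ := by
    rw [norm_mul]
    exact one_lt_mul_of_le_of_lt (one_le_norm_exp_of_re_nonneg hz) (one_lt_norm_one_add_of_re_pos hw)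
  simp [h] at hnorm

theorem stmt_9 (ε c p q : ℝ) (hε : 0 < ε) (hc : 0 < c) (hp : 0 ≤ p)
    (hq : |q| < π / (2 * ε)) :
    ¬ (Complex.exp (2 * (p + q * Complex.I)) *
        (1 + 2 * (c : ℂ) * Complex.exp (-(ε : ℂ) * (p + q * Complex.I))) = -1) := by
  apply exp_mul_one_add_ne_neg_one
  · simpa using hp
  · have him : |(-(ε : ℂ) * (p + q * I)).im| < π / 2 := by
      have : ε * |q| < π / 2 := by
        calc ε * |q| < ε * (π / (2 * ε)) := mul_lt_mul_of_pos_left hq hε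
          _ = π / 2 := by field_simp
      simpa [abs_mul, abs_of_pos hε] using this
    have hcast : 2 * (c : ℂ) = ((2 * c : ℝ) : ℂ) := by push_cast; rfl
    rw [hcast, re_ofReal_mul]
    exact mul_pos (by positivity) (exp_re_pos_of_abs_im_lt him)
end
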